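/- arXiv:1611.09763 — 3 statements merged into one kernel-verified Lean document; each statement's English description precedes it below -/
import Mathlib

section
/- Fix constants δ ∈ (0,1], b > 0, x̄ > 0, C > 0, S̄ > 0, and a constant K ∈ ℝ. Suppose b·x̄ > sqrt(C·S̄). Define U(ω) := K + (1 - (ω/(1+(1-ω)δ))·(C/(b·x̄)))·(S̄ - b·x̄·(1+(1-ω)δ)/ω) for ω ∈ (0,1]. Then U is strictly increasing on (0,1], and hence attains its maximum over (0,1] uniquely at ω = 1. -/
set_option maxHeartbeats 1600000 in
/-- The operator's payoff U(ω) = K + (1 - (ω/(1+(1-ω)δ))·C/(b·x̄))·(S̄ - b·x̄·(1+(1-ω)δ)/ω)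
is strictly increasing on (0,1] and uniquely maximized at ω = 1, provided b·x̄ > √(C·S̄). -/
theorem stmt_6 (δ b xbar C Sbar K : ℝ)
    (hδ : δ ∈ Set.Ioc (0:ℝ) 1) (hb : 0 < b) (hxbar : 0 < xbar) (hC : 0 < C)
    (hS : 0 < Sbar) (hbx : b * xbar > Real.sqrt (C * Sbar))
    (U : ℝ → ℝ)
    (hU : ∀ ω, U ω = K + (1 - (ω / (1 + (1 - ω) * δ)) * (C / (b * xbar))) *
        (Sbar - b * xbar * (1 + (1 - ω) * δ) / ω)) :
    StrictMonoOn U (Set.Ioc (0:ℝ) 1) ∧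
      ∀ ω ∈ Set.Ioc (0:ℝ) 1, ω ≠ 1 → U ω < U 1 := by
  obtain ⟨hδ0, hδ1⟩ := hδ
  have hB : 0 < b * xbar := mul_pos hb hxbar
  have hCS : 0 < C * Sbar := mul_pos hC hS
  have hkey : C * Sbar < (b * xbar) ^ 2 := by
    nlinarith [Real.sq_sqrt hCS.le, Real.sqrt_nonneg (C * Sbar)]
  have hmono : StrictMonoOn U (Set.Ioc (0:ℝ) 1) := by
    rintro ω1 ⟨h1p, h11⟩ ω2 ⟨h2p, h21⟩ h12
    have hd1 : (1:ℝ) ≤ 1 + (1 - ω1) * δ := by nlinarith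
    have hd2 : (1:ℝ) ≤ 1 + (1 - ω2) * δ := by nlinarith
    have hd1p : (0:ℝ) < 1 + (1 - ω1) * δ := by linarith
    have hd2p : (0:ℝ) < 1 + (1 - ω2) * δ := by linarith
    have hrw1 : U ω1 = K + C + Sbar -
        (b * xbar * (1 + (1 - ω1) * δ) / ω1
          + C * Sbar * ω1 / ((1 + (1 - ω1) * δ) * (b * xbar))) := by
      rw [hU ω1]; field_simp; ring
    have hrw2 : U ω2 = K + C + Sbar -
        (b * xbar * (1 + (1 - ω2) * δ) / ω2
          + C * Sbar * ω2 / ((1 + (1 - ω2) * δ) * (b * xbar))) := by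
      rw [hU ω2]; field_simp; ring
    rw [hrw1, hrw2]
    have hgoal : b * xbar * (1 + (1 - ω2) * δ) / ω2
          + C * Sbar * ω2 / ((1 + (1 - ω2) * δ) * (b * xbar))
        < b * xbar * (1 + (1 - ω1) * δ) / ω1
          + C * Sbar * ω1 / ((1 + (1 - ω1) * δ) * (b * xbar)) := by
      have hfac2 : C * Sbar * (ω1 * ω2) <
          (b * xbar) ^ 2 * ((1 + (1 - ω1) * δ) * (1 + (1 - ω2) * δ)) := by
        have h1 : ω1 * ω2 ≤ 1 := by nlinarith
        have h2 : (1:ℝ) ≤ (1 + (1 - ω1) * δ) * (1 + (1 - ω2) * δ) := by nlinarith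
        nlinarith [sq_nonneg (b * xbar)]
      have hid : (b * xbar * (1 + (1 - ω1) * δ) / ω1
            + C * Sbar * ω1 / ((1 + (1 - ω1) * δ) * (b * xbar)))
          - (b * xbar * (1 + (1 - ω2) * δ) / ω2
            + C * Sbar * ω2 / ((1 + (1 - ω2) * δ) * (b * xbar)))
          = ((ω2 - ω1) * (1 + δ)) *
              ((b * xbar) ^ 2 * ((1 + (1 - ω1) * δ) * (1 + (1 - ω2) * δ))
                - C * Sbar * (ω1 * ω2)) /
              (ω1 * ω2 * ((1 + (1 - ω1) * δ) * (1 + (1 - ω2) * δ)) * (b * xbar)) := by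
        field_simp
        ring
      have hpos : 0 < ((ω2 - ω1) * (1 + δ)) *
              ((b * xbar) ^ 2 * ((1 + (1 - ω1) * δ) * (1 + (1 - ω2) * δ))
                - C * Sbar * (ω1 * ω2)) /
              (ω1 * ω2 * ((1 + (1 - ω1) * δ) * (1 + (1 - ω2) * δ)) * (b * xbar)) := by
        apply div_pos
        · exact mul_pos (by nlinarith) (by linarith)
        · positivity
      linarith
    linarith
  refine ⟨hmono, ?_⟩
  intro ω hω hne
  exact hmono hω (Set.mem_Ioc.mpr ⟨one_pos, le_refl 1⟩) (lt_of_le_of_ne hω.2 hne)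
end

section
/- Let h > 0, γ ≥ 0, ω ∈ (0,1], δ ∈ [0,1], b > 0, x̄ > 0. Define the sensor's total expected utility E[U^S](x₁,x₂) := (1+δ)·γh/(h+γ) + (h/(h+γ))·((δ^ω·h/x̄ - b)·x₁ + δ·(ω·h/x̄ - b)·x₂) with δ^ω = 1+(1-ω)δ, for x₁, x₂ ∈ [0, x̄]. If h = b·x̄/ω then E[U^S] is maximized over [0,x̄]² at x₁ = x̄ (with any x₂), and the maximum value is nonnegative. -/
/-- With h = b·x̄/ω, the sensor's total expected utility is maximized at x₁ = x̄
(with any x₂), and the maximum value is nonnegative. -/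
theorem stmt_9 (h γ ω δ b xbar : ℝ)
    (hh : 0 < h) (hγ : 0 ≤ γ) (hω : 0 < ω) (hω1 : ω ≤ 1) (hδ0 : 0 ≤ δ) (hδ1 : δ ≤ 1)
    (hb : 0 < b) (hxbar : 0 < xbar)
    (US : ℝ → ℝ → ℝ)
    (hUS : ∀ x₁ x₂, US x₁ x₂ =
      (1 + δ) * (γ * h / (h + γ)) +
      (h / (h + γ)) * (((1 + (1 - ω) * δ) * h / xbar - b) * x₁ + δ * (ω * h / xbar - b) * x₂))
    (hhval : h = b * xbar / ω) :
    (∀ x₁ ∈ Set.Icc (0:ℝ) xbar, ∀ x₂ ∈ Set.Icc (0:ℝ) xbar, ∀ y ∈ Set.Icc (0:ℝ) xbar,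
        US x₁ x₂ ≤ US xbar y) ∧
    (∀ y ∈ Set.Icc (0:ℝ) xbar, 0 ≤ US xbar y) := by
  have hωh : ω * h = b * xbar := by
    rw [hhval]; field_simp
  have hc2 : ω * h / xbar - b = 0 := by
    field_simp
    linarith
  have hhγ : 0 < h + γ := by linarith
  have hK : 0 ≤ h / (h + γ) := by positivity
  have hC : 0 ≤ (1 + δ) * (γ * h / (h + γ)) := by positivity
  have hhx : h / xbar = b / ω := by
    rw [div_eq_div_iff hxbar.ne' hω.ne']; linarith
  have hA : 0 ≤ (1 + (1 - ω) * δ) * h / xbar - b := by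
    have h1 : (1 + (1 - ω) * δ) * h / xbar = (1 + (1 - ω) * δ) * (b / ω) := by
      rw [mul_div_assoc, hhx]
    rw [h1]
    have hbω : b ≤ b / ω := by
      rw [le_div_iff₀ hω]; nlinarith
    nlinarith [mul_nonneg (mul_nonneg (sub_nonneg.2 hω1) hδ0) (le_of_lt (div_pos hb hω))]
  constructor
  · intro x₁ hx₁ x₂ _ y _
    rw [hUS, hUS, hc2]
    have := hx₁.2
    nlinarith [mul_nonneg hK (mul_nonneg hA (sub_nonneg.2 hx₁.2))]
  · intro y _
    rw [hUS, hc2]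
    nlinarith [mul_nonneg hK (mul_nonneg hA (le_of_lt hxbar))]
end

section
/- Let b, x̄, C > 0 with C < b·x̄, δ ∈ (0,1), ω ∈ (0,1), δ^ω = 1+(1-ω)δ, h = b·x̄/ω, γ = 0. Then q₁ := 1 - (ω/δ^ω)·(C/(b·x̄)) and q₂ := 1 - C/(b·x̄) satisfy 0 < q₂ < q₁ < 1. -/
/-- Under the optimal parameters with C < b·x̄, δ ∈ (0,1), ω ∈ (0,1), the equilibrium
truth-telling probabilities q₁ = 1 - (ω/δω)·C/(b·x̄) and q₂ = 1 - C/(b·x̄) satisfy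
0 < q₂ < q₁ < 1. -/
theorem stmt_14 (b xbar C δ ω : ℝ)
    (hb : 0 < b) (hxbar : 0 < xbar) (hC : 0 < C) (hCb : C < b * xbar)
    (hδ : δ ∈ Set.Ioo (0:ℝ) 1) (hω : ω ∈ Set.Ioo (0:ℝ) 1) :
    0 < 1 - C / (b * xbar) ∧
    1 - C / (b * xbar) < 1 - (ω / (1 + (1 - ω) * δ)) * (C / (b * xbar)) ∧
    1 - (ω / (1 + (1 - ω) * δ)) * (C / (b * xbar)) < 1 := by
  obtain ⟨hδ0, hδ1⟩ := hδ
  obtain ⟨hω0, hω1⟩ := hω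
  have hbx : 0 < b * xbar := mul_pos hb hxbar
  have hr0 : 0 < C / (b * xbar) := div_pos hC hbx
  have hr1 : C / (b * xbar) < 1 := (div_lt_one hbx).mpr hCb
  have hden : (1:ℝ) < 1 + (1 - ω) * δ := by nlinarith
  have hfrac : ω / (1 + (1 - ω) * δ) < 1 := by
    rw [div_lt_one (by linarith)]; linarith
  have hfrac0 : 0 < ω / (1 + (1 - ω) * δ) := div_pos hω0 (by linarith)
  refine ⟨by linarith, ?_, ?_⟩
  · nlinarith
  · nlinarith
end
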